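/- Let T be a faithfully flat quantum torsor over k with Hopf algebras A = H_l(T) ⊆ T ⊗ T^op and B = H_r(T) ⊆ T^op ⊗ T coacting on T via α_T and β_T. Then the cotensor subsets (B ⊗ T)^{co B} and (T ⊗ A)^{co A} coincide as subsets of T ⊗ T ⊗ T. -/

import Mathlib

open TensorProduct

namespace Torsor

variable (k : Type*) [CommRing k] (T : Type*) [Ring T] [Algebra k T]

/-- Rearrangement `a ⊗ (b ⊗ c) ↦ b ⊗ (a ⊗ c)` for right-nested triple tensor products. -/
noncomputable def sw (M N P : Type*) [AddCommGroup M] [AddCommGroup N] [AddCommGroup P]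
    [Module k M] [Module k N] [Module k P] :
    M ⊗[k] (N ⊗[k] P) ≃ₗ[k] N ⊗[k] (M ⊗[k] P) :=
  (TensorProduct.assoc k M N P).symm ≪≫ₗ
    (TensorProduct.congr (TensorProduct.comm k M N) (LinearEquiv.refl k P)) ≪≫ₗ
    TensorProduct.assoc k N M P

/-- The linear identification `T ⊗ T ⊗ T ≅ T ⊗ T^op ⊗ T`. -/
noncomputable def e3 : T ⊗[k] (T ⊗[k] T) ≃ₗ[k] T ⊗[k] (Tᵐᵒᵖ ⊗[k] T) :=
  TensorProduct.congr (LinearEquiv.refl k T)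
    (TensorProduct.congr (MulOpposite.opLinearEquiv k) (LinearEquiv.refl k T))

/-- The multiplication of the algebra `T ⊗ T^op ⊗ T`, transported to `T ⊗ T ⊗ T`. -/
noncomputable def mulMidOp (u v : T ⊗[k] (T ⊗[k] T)) : T ⊗[k] (T ⊗[k] T) :=
  (e3 k T).symm ((e3 k T) u * (e3 k T) v)

/-- Reversal `a ⊗ b ⊗ c ↦ c ⊗ b ⊗ a` of a triple tensor product. -/
noncomputable def rev3 : T ⊗[k] (T ⊗[k] T) →ₗ[k] T ⊗[k] (T ⊗[k] T) :=
  (TensorProduct.map LinearMap.id (TensorProduct.comm k T T).toLinearMap) ∘ₗ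
    (TensorProduct.comm k (T ⊗[k] T) T).toLinearMap ∘ₗ
    (TensorProduct.assoc k T T T).symm.toLinearMap

/-- Expansion of the first leg of `T ⊗ (T ⊗ T)` by a map `ν : T → T ⊗ T ⊗ T`. -/
noncomputable def expandFirst (ν : T →ₗ[k] T ⊗[k] (T ⊗[k] T)) :
    T ⊗[k] (T ⊗[k] T) →ₗ[k] T ⊗[k] (T ⊗[k] (T ⊗[k] (T ⊗[k] T))) :=
  (TensorProduct.map LinearMap.id (TensorProduct.assoc k T T (T ⊗[k] T)).toLinearMap) ∘ₗ
    (TensorProduct.assoc k T (T ⊗[k] T) (T ⊗[k] T)).toLinearMap ∘ₗ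
    (TensorProduct.map ν LinearMap.id)

/-- Expansion of the last leg of `T ⊗ (T ⊗ T)` by a map `ν : T → T ⊗ T ⊗ T`. -/
noncomputable def expandLast (ν : T →ₗ[k] T ⊗[k] (T ⊗[k] T)) :
    T ⊗[k] (T ⊗[k] T) →ₗ[k] T ⊗[k] (T ⊗[k] (T ⊗[k] (T ⊗[k] T))) :=
  TensorProduct.map LinearMap.id (TensorProduct.map LinearMap.id ν)

/-- Expansion of the first leg of `T ⊗ T` by a map `ν : T → T ⊗ T ⊗ T`. -/
noncomputable def inner (ν : T →ₗ[k] T ⊗[k] (T ⊗[k] T)) :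
    T ⊗[k] T →ₗ[k] T ⊗[k] (T ⊗[k] (T ⊗[k] T)) :=
  (TensorProduct.map LinearMap.id (TensorProduct.assoc k T T T).toLinearMap) ∘ₗ
    (TensorProduct.assoc k T (T ⊗[k] T) T).toLinearMap ∘ₗ
    (TensorProduct.map ν LinearMap.id)

/-- Expansion of the middle leg of `T ⊗ (T ⊗ T)` by a map `ν : T → T ⊗ T ⊗ T`. -/
noncomputable def expandMid (ν : T →ₗ[k] T ⊗[k] (T ⊗[k] T)) :
    T ⊗[k] (T ⊗[k] T) →ₗ[k] T ⊗[k] (T ⊗[k] (T ⊗[k] (T ⊗[k] T))) :=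
  TensorProduct.map LinearMap.id (inner k T ν)

/-- A quantum torsor structure on the `k`-algebra `T`: an algebra morphism
`μ : T → T ⊗ T^op ⊗ T` (encoded as a linear map to `T ⊗ T ⊗ T` which is unital and
multiplicative for the `T ⊗ T^op ⊗ T` product) satisfying the counit laws
`(m ⊗ T)∘μ(x) = 1 ⊗ x`, `(T ⊗ m)∘μ(x) = x ⊗ 1` and coassociativity, together with an
algebra endomorphism `θ` satisfying Grunspan's torsor-endomorphism law
`x^(1) ⊗ x^(2) ⊗ θ(x^(3)) ⊗ x^(4) ⊗ x^(5) = x^(1) ⊗ x^(2)^(3) ⊗ x^(2)^(2) ⊗ x^(2)^(1) ⊗ x^(3)`. -/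
structure _root_.QuantumTorsor where
  μ : T →ₗ[k] T ⊗[k] (T ⊗[k] T)
  θ : T →ₐ[k] T
  μ_one : μ 1 = 1 ⊗ₜ[k] (1 ⊗ₜ[k] 1)
  μ_mul : ∀ x y : T, μ (x * y) = mulMidOp k T (μ x) (μ y)
  counit_left : (TensorProduct.map (LinearMap.mul' k T) LinearMap.id) ∘ₗ
      (TensorProduct.assoc k T T T).symm.toLinearMap ∘ₗ μ = (TensorProduct.mk k T T) 1
  counit_right : (TensorProduct.map LinearMap.id (LinearMap.mul' k T)) ∘ₗ μ
      = (TensorProduct.mk k T T).flip 1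
  coassoc : (expandLast k T μ) ∘ₗ μ = (expandFirst k T μ) ∘ₗ μ
  theta_law :
    (TensorProduct.map LinearMap.id
        (TensorProduct.map LinearMap.id (TensorProduct.map θ.toLinearMap LinearMap.id))) ∘ₗ
      (expandLast k T μ) ∘ₗ μ
    = (expandMid k T ((rev3 k T) ∘ₗ μ)) ∘ₗ μ

variable {k T}

/-- The defining submodule of the Hopf algebra `A = H_l(T) ⊆ T ⊗ T^op`:
elements with `Σ x^(1) ⊗ x^(2) ⊗ θ(x^(3)) ⊗ y = Σ x ⊗ y^(3) ⊗ y^(2) ⊗ y^(1)`. -/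
noncomputable def subA (qt : QuantumTorsor k T) : Submodule k (T ⊗[k] T) :=
  LinearMap.eqLocus
    (((TensorProduct.map LinearMap.id
        (TensorProduct.map LinearMap.id (TensorProduct.map qt.θ.toLinearMap LinearMap.id))) ∘ₗ
      (inner k T qt.μ)))
    (TensorProduct.map LinearMap.id ((rev3 k T) ∘ₗ qt.μ))

/-- The defining submodule of the Hopf algebra `B = H_r(T) ⊆ T^op ⊗ T`:
elements with `Σ x ⊗ θ(y^(1)) ⊗ y^(2) ⊗ y^(3) = Σ x^(3) ⊗ x^(2) ⊗ x^(1) ⊗ y`. -/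
noncomputable def subB (qt : QuantumTorsor k T) : Submodule k (T ⊗[k] T) :=
  LinearMap.eqLocus
    (TensorProduct.map LinearMap.id
        ((TensorProduct.map qt.θ.toLinearMap LinearMap.id) ∘ₗ qt.μ))
    (inner k T ((rev3 k T) ∘ₗ qt.μ))

/-- The image of `B ⊗ T` inside `T ⊗ T ⊗ T`. -/
noncomputable def subBT (qt : QuantumTorsor k T) : Submodule k (T ⊗[k] (T ⊗[k] T)) :=
  Submodule.map (TensorProduct.assoc k T T T).toLinearMap
    (LinearMap.range (TensorProduct.map (subB qt).subtype (LinearMap.id (R := k) (M := T))))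

/-- The image of `T ⊗ A` inside `T ⊗ T ⊗ T`. -/
noncomputable def subTA (qt : QuantumTorsor k T) : Submodule k (T ⊗[k] (T ⊗[k] T)) :=
  LinearMap.range (TensorProduct.map (LinearMap.id (R := k) (M := T)) (subA qt).subtype)

/-- The left-hand side of the right `B`-coinvariance condition on `B ⊗ T`:
`x ⊗ y ⊗ z ↦ x ⊗ y ⊗ z^(1) ⊗ z^(2) ⊗ z^(3)`. -/
noncomputable def eq1L (qt : QuantumTorsor k T) :
    T ⊗[k] (T ⊗[k] T) →ₗ[k] T ⊗[k] (T ⊗[k] (T ⊗[k] (T ⊗[k] T))) :=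
  TensorProduct.map LinearMap.id (TensorProduct.map LinearMap.id qt.μ)

/-- The right-hand side of the right `B`-coinvariance condition on `B ⊗ T`:
`x ⊗ y ⊗ z ↦ x ⊗ y^(1) ⊗ z ⊗ θ(y^(3)) ⊗ y^(2)`. -/
noncomputable def eq1R (qt : QuantumTorsor k T) :
    T ⊗[k] (T ⊗[k] T) →ₗ[k] T ⊗[k] (T ⊗[k] (T ⊗[k] (T ⊗[k] T))) :=
  (TensorProduct.map LinearMap.id
      ((TensorProduct.map LinearMap.id
          ((TensorProduct.map LinearMap.id (TensorProduct.comm k T T).toLinearMap) ∘ₗ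
            (TensorProduct.comm k (T ⊗[k] T) T).toLinearMap)) ∘ₗ
        (TensorProduct.assoc k T (T ⊗[k] T) T).toLinearMap)) ∘ₗ
    (TensorProduct.map LinearMap.id
      (TensorProduct.map
        (TensorProduct.map LinearMap.id (TensorProduct.map LinearMap.id qt.θ.toLinearMap))
        LinearMap.id)) ∘ₗ
    (TensorProduct.map LinearMap.id (TensorProduct.map qt.μ LinearMap.id))

/-- The left-hand side of the left `A`-coinvariance condition on `T ⊗ A`:
`x ⊗ y ⊗ z ↦ x^(1) ⊗ x^(2) ⊗ x^(3) ⊗ y ⊗ z`. -/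
noncomputable def eq2L (qt : QuantumTorsor k T) :
    T ⊗[k] (T ⊗[k] T) →ₗ[k] T ⊗[k] (T ⊗[k] (T ⊗[k] (T ⊗[k] T))) :=
  expandFirst k T qt.μ

/-- The right-hand side of the left `A`-coinvariance condition on `T ⊗ A`:
`x ⊗ y ⊗ z ↦ y^(2) ⊗ θ(y^(1)) ⊗ x ⊗ y^(3) ⊗ z`. -/
noncomputable def eq2R (qt : QuantumTorsor k T) :
    T ⊗[k] (T ⊗[k] T) →ₗ[k] T ⊗[k] (T ⊗[k] (T ⊗[k] (T ⊗[k] T))) :=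
  (TensorProduct.map LinearMap.id
      (TensorProduct.map LinearMap.id (sw k T T T).toLinearMap)) ∘ₗ
    (sw k T T (T ⊗[k] (T ⊗[k] T))).toLinearMap ∘ₗ
    (TensorProduct.map LinearMap.id (TensorProduct.assoc k T T (T ⊗[k] T)).toLinearMap) ∘ₗ
    (TensorProduct.assoc k T (T ⊗[k] T) (T ⊗[k] T)).toLinearMap ∘ₗ
    (TensorProduct.map (TensorProduct.map qt.θ.toLinearMap LinearMap.id) LinearMap.id) ∘ₗ
    (TensorProduct.map qt.μ LinearMap.id) ∘ₗ
    (sw k T T T).toLinearMap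

/-- The coinvariants `(B ⊗ T)^{co B}`, as a submodule of `T ⊗ T ⊗ T`. -/
noncomputable def coinvB (qt : QuantumTorsor k T) : Submodule k (T ⊗[k] (T ⊗[k] T)) :=
  subBT qt ⊓ LinearMap.eqLocus (eq1L qt) (eq1R qt)

/-- The coinvariants `(T ⊗ A)^{co A}`, as a submodule of `T ⊗ T ⊗ T`. -/
noncomputable def coinvA (qt : QuantumTorsor k T) : Submodule k (T ⊗[k] (T ⊗[k] T)) :=
  subTA qt ⊓ LinearMap.eqLocus (eq2L qt) (eq2R qt)

end Torsor

namespace Torsor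
variable {k : Type*} [CommRing k] {T : Type*} [Ring T] [Algebra k T]

set_option synthInstance.maxHeartbeats 400000
set_option maxHeartbeats 1000000

/-- First defining map of `subA`. -/
noncomputable def fA (qt : QuantumTorsor k T) : T ⊗[k] T →ₗ[k] T ⊗[k] (T ⊗[k] (T ⊗[k] T)) :=
  (TensorProduct.map LinearMap.id
      (TensorProduct.map LinearMap.id (TensorProduct.map qt.θ.toLinearMap LinearMap.id))) ∘ₗ
    (inner k T qt.μ)

/-- Second defining map of `subA`. -/
noncomputable def gA (qt : QuantumTorsor k T) : T ⊗[k] T →ₗ[k] T ⊗[k] (T ⊗[k] (T ⊗[k] T)) :=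
  TensorProduct.map LinearMap.id ((rev3 k T) ∘ₗ qt.μ)

lemma subA_def (qt : QuantumTorsor k T) : subA qt = LinearMap.eqLocus (fA qt) (gA qt) := rfl

/-- First defining map of `subB`. -/
noncomputable def fB (qt : QuantumTorsor k T) : T ⊗[k] T →ₗ[k] T ⊗[k] (T ⊗[k] (T ⊗[k] T)) :=
  TensorProduct.map LinearMap.id ((TensorProduct.map qt.θ.toLinearMap LinearMap.id) ∘ₗ qt.μ)

/-- Second defining map of `subB`. -/
noncomputable def gB (qt : QuantumTorsor k T) : T ⊗[k] T →ₗ[k] T ⊗[k] (T ⊗[k] (T ⊗[k] T)) :=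
  inner k T ((rev3 k T) ∘ₗ qt.μ)

lemma subB_def (qt : QuantumTorsor k T) : subB qt = LinearMap.eqLocus (fB qt) (gB qt) := rfl

/-- `rev3` as a linear equivalence. -/
noncomputable def rev3e (k : Type*) [CommRing k] (T : Type*) [Ring T] [Algebra k T] :
    T ⊗[k] (T ⊗[k] T) ≃ₗ[k] T ⊗[k] (T ⊗[k] T) :=
  (TensorProduct.assoc k T T T).symm ≪≫ₗ TensorProduct.comm k (T ⊗[k] T) T ≪≫ₗ
    TensorProduct.congr (LinearEquiv.refl k T) (TensorProduct.comm k T T)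

lemma rev3_eq_rev3e (k : Type*) [CommRing k] (T : Type*) [Ring T] [Algebra k T] :
    rev3 k T = (rev3e k T).toLinearMap := rfl

lemma rev3_invol (k : Type*) [CommRing k] (T : Type*) [Ring T] [Algebra k T] :
    rev3 k T ∘ₗ rev3 k T = LinearMap.id := by
  ext x y z
  simp [rev3]

/-- Reversal of the first three legs of a fourfold tensor product. -/
noncomputable def r4 (k : Type*) [CommRing k] (T : Type*) [Ring T] [Algebra k T] :
    T ⊗[k] (T ⊗[k] (T ⊗[k] T)) ≃ₗ[k] T ⊗[k] (T ⊗[k] (T ⊗[k] T)) :=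
  TensorProduct.congr (LinearEquiv.refl k T) (TensorProduct.assoc k T T T).symm ≪≫ₗ
    (TensorProduct.assoc k T (T ⊗[k] T) T).symm ≪≫ₗ
    TensorProduct.congr (rev3e k T) (LinearEquiv.refl k T) ≪≫ₗ
    TensorProduct.assoc k T (T ⊗[k] T) T ≪≫ₗ
    TensorProduct.congr (LinearEquiv.refl k T) (TensorProduct.assoc k T T T)

/-- The structural permutation used to compare the two coinvariance conditions on the `B` side. -/
noncomputable def perm5 (k : Type*) [CommRing k] (T : Type*) [Ring T] [Algebra k T] :
    (T ⊗[k] (T ⊗[k] (T ⊗[k] T))) ⊗[k] T ≃ₗ[k] T ⊗[k] (T ⊗[k] (T ⊗[k] (T ⊗[k] T))) :=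
  TensorProduct.congr (r4 k T) (LinearEquiv.refl k T) ≪≫ₗ
    TensorProduct.assoc k T (T ⊗[k] (T ⊗[k] T)) T ≪≫ₗ
    TensorProduct.congr (LinearEquiv.refl k T) (TensorProduct.assoc k T (T ⊗[k] T) T) ≪≫ₗ
    TensorProduct.congr (LinearEquiv.refl k T)
      (TensorProduct.congr (LinearEquiv.refl k T) (TensorProduct.assoc k T T T))

lemma eq1L_eq (qt : QuantumTorsor k T) :
    eq1L qt = LinearMap.lTensor T ((LinearMap.lTensor T (rev3 k T)) ∘ₗ gA qt) := by
  have h : (rev3 k T) ∘ₗ ((rev3 k T) ∘ₗ qt.μ) = qt.μ := by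
    rw [← LinearMap.comp_assoc, rev3_invol, LinearMap.id_comp]
  rw [show gA qt = LinearMap.lTensor T ((rev3 k T) ∘ₗ qt.μ) from rfl,
    ← LinearMap.lTensor_comp, h]
  rfl

lemma eq1R_eq (qt : QuantumTorsor k T) :
    eq1R qt = LinearMap.lTensor T ((LinearMap.lTensor T (rev3 k T)) ∘ₗ fA qt) := by
  ext x y z
  simp only [eq1R, fA, inner, LinearMap.coe_comp, Function.comp_apply, LinearMap.lTensor_tmul,
    TensorProduct.map_tmul, LinearMap.id_coe, id_eq, AlgHom.toLinearMap_apply,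
    LinearEquiv.coe_coe, TensorProduct.AlgebraTensorModule.curry_apply,
    TensorProduct.curry_apply, LinearMap.coe_restrictScalars]
  generalize qt.μ y = w
  induction w using TensorProduct.induction_on with
  | zero => simp only [map_zero, zero_tmul, tmul_zero]
  | add u v hu hv => simp only [tmul_add, add_tmul, map_add, hu, hv]
  | tmul a bc =>
    induction bc using TensorProduct.induction_on with
    | zero => simp only [map_zero, zero_tmul, tmul_zero]
    | add u v hu hv => simp only [tmul_add, add_tmul, map_add, hu, hv]
    | tmul b c => simp [rev3]

lemma eq2L_eq (qt : QuantumTorsor k T) :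
    eq2L qt = (perm5 k T).toLinearMap ∘ₗ (LinearMap.rTensor T (gB qt)) ∘ₗ
      (TensorProduct.assoc k T T T).symm.toLinearMap := by
  ext x y z
  simp only [eq2L, expandFirst, gB, inner, LinearMap.coe_comp, Function.comp_apply,
    LinearEquiv.coe_coe, TensorProduct.map_tmul, LinearMap.id_coe, id_eq,
    TensorProduct.assoc_symm_tmul, LinearMap.rTensor_tmul,
    TensorProduct.AlgebraTensorModule.curry_apply,
    TensorProduct.curry_apply, LinearMap.coe_restrictScalars]
  generalize qt.μ x = w
  induction w using TensorProduct.induction_on with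
  | zero => simp only [map_zero, zero_tmul, tmul_zero]
  | add u v hu hv => simp only [tmul_add, add_tmul, map_add, hu, hv]
  | tmul a bc =>
    induction bc using TensorProduct.induction_on with
    | zero => simp only [map_zero, zero_tmul, tmul_zero]
    | add u v hu hv => simp only [tmul_add, add_tmul, map_add, hu, hv]
    | tmul b c => simp [rev3, rev3e, perm5, r4]

lemma eq2R_eq (qt : QuantumTorsor k T) :
    eq2R qt = (perm5 k T).toLinearMap ∘ₗ (LinearMap.rTensor T (fB qt)) ∘ₗ
      (TensorProduct.assoc k T T T).symm.toLinearMap := by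
  ext x y z
  simp only [eq2R, fB, sw, LinearMap.coe_comp, Function.comp_apply,
    LinearEquiv.coe_coe, LinearEquiv.trans_apply, TensorProduct.map_tmul,
    TensorProduct.congr_tmul, LinearEquiv.refl_apply, TensorProduct.comm_tmul,
    TensorProduct.assoc_tmul, TensorProduct.assoc_symm_tmul,
    LinearMap.id_coe, id_eq, LinearMap.rTensor_tmul,
    TensorProduct.AlgebraTensorModule.curry_apply,
    TensorProduct.curry_apply, LinearMap.coe_restrictScalars]
  generalize qt.μ y = w
  induction w using TensorProduct.induction_on with
  | zero => simp only [map_zero, zero_tmul, tmul_zero]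
  | add u v hu hv => simp only [tmul_add, add_tmul, map_add, hu, hv]
  | tmul a bc =>
    induction bc using TensorProduct.induction_on with
    | zero => simp only [map_zero, zero_tmul, tmul_zero]
    | add u v hu hv => simp only [tmul_add, add_tmul, map_add, hu, hv]
    | tmul b c => simp [rev3, rev3e, perm5, r4, sw]

lemma flat_eqLocus_lTensor {M N P : Type*} [AddCommGroup M] [AddCommGroup N] [AddCommGroup P]
    [Module k M] [Module k N] [Module k P] [Module.Flat k M] (f g : N →ₗ[k] P) :
    LinearMap.eqLocus (LinearMap.lTensor M f) (LinearMap.lTensor M g)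
      = LinearMap.range (LinearMap.lTensor M (LinearMap.eqLocus f g).subtype) := by
  rw [LinearMap.eqLocus_eq_ker_sub, LinearMap.eqLocus_eq_ker_sub, ← LinearMap.lTensor_sub]
  exact LinearMap.exact_iff.mp (Module.Flat.lTensor_exact M (LinearMap.exact_subtype_ker_map _))

lemma flat_eqLocus_rTensor {M N P : Type*} [AddCommGroup M] [AddCommGroup N] [AddCommGroup P]
    [Module k M] [Module k N] [Module k P] [Module.Flat k M] (f g : N →ₗ[k] P) :
    LinearMap.eqLocus (LinearMap.rTensor M f) (LinearMap.rTensor M g)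
      = LinearMap.range (LinearMap.rTensor M (LinearMap.eqLocus f g).subtype) := by
  rw [LinearMap.eqLocus_eq_ker_sub, LinearMap.eqLocus_eq_ker_sub, ← LinearMap.rTensor_sub]
  exact LinearMap.exact_iff.mp (Module.Flat.rTensor_exact M (LinearMap.exact_subtype_ker_map _))

lemma subTA_eq [Module.Flat k T] (qt : QuantumTorsor k T) :
    subTA qt = LinearMap.eqLocus (eq1L qt) (eq1R qt) := by
  have hinj : Function.Injective (LinearMap.lTensor T (LinearMap.lTensor T (rev3 k T))) := by
    have h : LinearMap.lTensor T (LinearMap.lTensor T (rev3 k T))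
        = (TensorProduct.congr (LinearEquiv.refl k T)
            (TensorProduct.congr (LinearEquiv.refl k T) (rev3e k T))).toLinearMap := rfl
    rw [h]
    exact (TensorProduct.congr (LinearEquiv.refl k T)
      (TensorProduct.congr (LinearEquiv.refl k T) (rev3e k T))).injective
  have hTA : subTA qt = LinearMap.eqLocus (LinearMap.lTensor T (fA qt))
      (LinearMap.lTensor T (gA qt)) := by
    have h := flat_eqLocus_lTensor (M := T) (N := T ⊗[k] T)
        (P := T ⊗[k] (T ⊗[k] (T ⊗[k] T))) (fA qt) (gA qt)
    rw [h]
    rfl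
  rw [hTA]
  ext u
  rw [LinearMap.mem_eqLocus, LinearMap.mem_eqLocus, eq1L_eq qt, eq1R_eq qt,
    LinearMap.lTensor_comp, LinearMap.lTensor_comp]
  simp only [LinearMap.coe_comp, Function.comp_apply]
  exact ⟨fun h => by rw [h], fun h => (hinj h).symm⟩

lemma subBT_eq [Module.Flat k T] (qt : QuantumTorsor k T) :
    subBT qt = LinearMap.eqLocus (eq2L qt) (eq2R qt) := by
  have hBT : subBT qt = Submodule.map (TensorProduct.assoc k T T T).toLinearMap
      (LinearMap.eqLocus (LinearMap.rTensor T (fB qt)) (LinearMap.rTensor T (gB qt))) := by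
    have h := flat_eqLocus_rTensor (M := T) (N := T ⊗[k] T)
        (P := T ⊗[k] (T ⊗[k] (T ⊗[k] T))) (fB qt) (gB qt)
    rw [h]
    rfl
  rw [hBT]
  ext u
  rw [Submodule.mem_map_equiv, LinearMap.mem_eqLocus, LinearMap.mem_eqLocus,
    eq2L_eq qt, eq2R_eq qt]
  simp only [LinearMap.coe_comp, Function.comp_apply, LinearEquiv.coe_coe]
  constructor
  · intro h
    exact congrArg _ h.symm
  · intro h
    exact ((perm5 k T).injective h).symm

end Torsor
open Torsor in
/-- For a faithfully flat quantum torsor `T` with associated Hopf algebras `A = H_l(T)` and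
`B = H_r(T)`, the cotensor subsets `(B ⊗ T)^{co B}` and `(T ⊗ A)^{co A}` coincide as subsets
of `T ⊗ T ⊗ T`. -/
theorem coinvB_eq_coinvA
    (k : Type*) [CommRing k] (T : Type*) [Ring T] [Algebra k T]
    [Module.FaithfullyFlat k T] (qt : QuantumTorsor k T) :
    Torsor.coinvB qt = Torsor.coinvA qt := by
  unfold Torsor.coinvB Torsor.coinvA
  rw [Torsor.subBT_eq qt, Torsor.subTA_eq qt]
  exact inf_comm _ _
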